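/- Let (ℒ, ℒ̄) be a Toda Lax pair in the standard gauge and φ : ℤ → ℂ such that the constraint of type B, (T − T†)ℒ̄ = ℒ†(T − T†), holds. Then for every integer k ≥ 1 the following matrix identity holds: (T − T†)B_k − B̄_k†(T − T†) = ((ℒ̄†)^k)_{1} T† − T† (ℒ^k)_{1} + Φ̄_k T − T Φ_k. -/

import Mathlib

/-- Pseudo-difference operators modeled as ℤ×ℤ matrices over ℂ. -/
abbrev PDO := ℤ → ℤ → ℂ

/-- Entrywise matrix product `(MN)(n,m) = Σ_k M(n,k) N(k,m)` (a `tsum`;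
it reduces to a finite sum whenever the supports make it finitely supported). -/
noncomputable def pmul (M N : PDO) : PDO := fun n m => ∑' k : ℤ, M n k * N k m

/-- The adjoint: `(M†)(n,m) = M(m,n)`. -/
def padj (M : PDO) : PDO := fun n m => M m n

/-- Matrix powers, with `ppow M 0` the identity matrix. -/
noncomputable def ppow (M : PDO) : ℕ → PDO
  | 0 => fun n m => if n = m then 1 else 0
  | k + 1 => pmul (ppow M k) M

/-- `(M)_{>0}`: the strictly upper-triangular (positive-diagonal) part. -/
def pplus (M : PDO) : PDO := fun n m => if n < m then M n m else 0

/-- `(M)_{<0}`: the strictly lower-triangular (negative-diagonal) part. -/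
def pminus (M : PDO) : PDO := fun n m => if m < n then M n m else 0

/-- `(M)_0`: the diagonal part. -/
def pzero (M : PDO) : PDO := fun n m => if n = m then M n m else 0

/-- `(M)_j`: the j-th diagonal part, with `(n, n+j)` entry `M(n, n+j)`. -/
def pdiag (j : ℤ) (M : PDO) : PDO := fun n m => if m = n + j then M n m else 0

/-- The shift matrix Λ: entries 1 iff `m = n+1`. -/
def shiftΛ : PDO := fun n m => if m = n + 1 then 1 else 0

/-- The inverse shift matrix Λ⁻¹ (transpose of Λ): entries 1 iff `m = n-1`. -/
def shiftΛinv : PDO := fun n m => if m = n - 1 then 1 else 0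

/-- Matrix `T` with entries `T(n,m) = e^{-φ(n)}` if `m = n+1`, else 0. -/
noncomputable def Tmat (φ : ℤ → ℂ) : PDO :=
  fun n m => if m = n + 1 then Complex.exp (-(φ n)) else 0

/-- A Toda Lax pair in the standard gauge: `L` is of lower type with
`L(n,m) = 0` for `m > n+1` and `L(n,n+1) = 1`; `L̄` is of upper type with
`L̄(n,m) = 0` for `m < n-1`. -/
def IsStandardPair (L Lb : PDO) : Prop :=
  (∀ n m : ℤ, n + 1 < m → L n m = 0) ∧ (∀ n : ℤ, L n (n + 1) = 1) ∧
  (∀ n m : ℤ, m < n - 1 → Lb n m = 0)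

/-- `B_k = (L^k)_{>0}`. -/
noncomputable def Bop (L : PDO) (k : ℕ) : PDO := pplus (ppow L k)

/-- `Φ_k = (L^k)_0`. -/
noncomputable def Phiop (L : PDO) (k : ℕ) : PDO := pzero (ppow L k)

/-- `B̄_k = (L̄^k)_{<0}`. -/
noncomputable def Bbarop (Lb : PDO) (k : ℕ) : PDO := pminus (ppow Lb k)

/-- `Φ̄_k = (L̄^k)_0`. -/
noncomputable def Phibarop (Lb : PDO) (k : ℕ) : PDO := pzero (ppow Lb k)


/-! Taking adjoints in the constraint, with `(T - T†)† = -(T - T†)`, gives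
`(T - T†) ℒ = ℒ̄† (T - T†)`, and then `(T - T†) ℒᵏ = (ℒ̄†)ᵏ (T - T†)`; every product met on
the way is of lower type, so associativity is available. Moreover `B̄ₖ† = ((ℒ̄†)ᵏ)_{>0}` and
`Φ̄ₖ = ((ℒ̄†)ᵏ)₀`. Since `T - T†` lives on the diagonals `±1`, the diagonals `≥ 2` of
`(T - T†) (ℒᵏ)_{>0} - ((ℒ̄†)ᵏ)_{>0} (T - T†)` coincide with those of the intertwining
relation and vanish; the diagonal `0` is `((ℒ̄†)ᵏ)₁ T† - T† (ℒᵏ)₁`, and the diagonal `1` of the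
intertwining relation turns the diagonal `1` into `Φ̄ₖ T - T Φₖ`. -/

def IsLowerType (M : PDO) : Prop := ∃ N : ℤ, ∀ n m : ℤ, n + N < m → M n m = 0

lemma padj_padj (M : PDO) : padj (padj M) = M := rfl

lemma padj_pminus (M : PDO) : padj (pminus M) = pplus (padj M) := rfl

lemma pzero_padj (M : PDO) : pzero (padj M) = pzero M := by
  funext n m
  by_cases h : n = m
  · subst h; rfl
  · simp only [pzero, if_neg h]

lemma padj_pmul (M N : PDO) : padj (pmul M N) = pmul (padj N) (padj M) := by
  funext n m
  exact tsum_congr fun k => mul_comm _ _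

lemma pmul_neg (M N : PDO) : pmul M (-N) = -pmul M N := by
  funext n m
  simp only [pmul, Pi.neg_apply, mul_neg, tsum_neg]

lemma neg_pmul (M N : PDO) : pmul (-M) N = -pmul M N := by
  funext n m
  simp only [pmul, Pi.neg_apply, neg_mul, tsum_neg]

lemma pmul_ppow_zero (M X : PDO) : pmul M (ppow X 0) = M := by
  funext n m
  simp only [pmul, ppow]
  rw [tsum_eq_single m fun k hk => by rw [if_neg hk, mul_zero], if_pos rfl, mul_one]

lemma ppow_zero_pmul (X M : PDO) : pmul (ppow X 0) M = M := by
  funext n m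
  simp only [pmul, ppow]
  rw [tsum_eq_single n fun k hk => by rw [if_neg (Ne.symm hk), zero_mul], if_pos rfl, one_mul]

lemma pmul_apply_eq_zero_of_lt {M N : PDO} {a b : ℤ}
    (hM : ∀ n m : ℤ, n + a < m → M n m = 0) (hN : ∀ n m : ℤ, n + b < m → N n m = 0)
    {n m : ℤ} (h : n + (a + b) < m) : pmul M N n m = 0 := by
  refine (tsum_congr fun k => ?_).trans tsum_zero
  by_cases hk : n + a < k
  · rw [hM n k hk, zero_mul]
  · rw [hN k m (by omega), mul_zero]

lemma IsLowerType.pmul {M N : PDO} (hM : IsLowerType M) (hN : IsLowerType N) :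
    IsLowerType (pmul M N) :=
  let ⟨a, ha⟩ := hM
  let ⟨b, hb⟩ := hN
  ⟨a + b, fun _ _ => pmul_apply_eq_zero_of_lt ha hb⟩

lemma IsLowerType.ppow {M : PDO} (hM : IsLowerType M) : ∀ k : ℕ, IsLowerType (ppow M k)
  | 0 => ⟨0, fun n m h => if_neg (by omega)⟩
  | k + 1 => (hM.ppow k).pmul hM

lemma pmul_assoc_of_isLowerType {M N P : PDO} (hM : IsLowerType M) (hN : IsLowerType N)
    (hP : IsLowerType P) : pmul M (pmul N P) = pmul (pmul M N) P := by
  obtain ⟨a, ha⟩ := hM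
  obtain ⟨b, hb⟩ := hN
  obtain ⟨c, hc⟩ := hP
  funext n m
  -- the support bounds confine the summation indices of both bracketings to `s` and `t`
  set s := Finset.Icc (m - c - b) (n + a)
  set t := Finset.Icc (m - c) (n + a + b)
  have hNP : ∀ j ∈ s, pmul N P j m = ∑ i ∈ t, N j i * P i m := fun j hj =>
    tsum_eq_sum fun i hi => by
      rw [Finset.mem_Icc] at hj hi
      by_cases hi' : i < m - c
      · rw [hc i m (by omega), mul_zero]
      · rw [hb j i (by omega), zero_mul]
  have hMN : ∀ i ∈ t, pmul M N n i = ∑ j ∈ s, M n j * N j i := fun i hi =>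
    tsum_eq_sum fun j hj => by
      rw [Finset.mem_Icc] at hj hi
      by_cases hj' : n + a < j
      · rw [ha n j hj', zero_mul]
      · rw [hb j i (by omega), mul_zero]
  have hleft : pmul M (pmul N P) n m = ∑ j ∈ s, M n j * pmul N P j m :=
    tsum_eq_sum fun j hj => by
      rw [Finset.mem_Icc] at hj
      by_cases hj' : n + a < j
      · rw [ha n j hj', zero_mul]
      · rw [pmul_apply_eq_zero_of_lt hb hc (by omega), mul_zero]
  have hright : pmul (pmul M N) P n m = ∑ i ∈ t, pmul M N n i * P i m :=
    tsum_eq_sum fun i hi => by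
      rw [Finset.mem_Icc] at hi
      by_cases hi' : i < m - c
      · rw [hc i m (by omega), mul_zero]
      · rw [pmul_apply_eq_zero_of_lt ha hb (by omega), zero_mul]
  rw [hleft, hright]
  calc ∑ j ∈ s, M n j * pmul N P j m
      = ∑ j ∈ s, ∑ i ∈ t, M n j * (N j i * P i m) :=
        Finset.sum_congr rfl fun j hj => by rw [hNP j hj, Finset.mul_sum]
    _ = ∑ i ∈ t, ∑ j ∈ s, M n j * (N j i * P i m) := Finset.sum_comm
    _ = ∑ i ∈ t, pmul M N n i * P i m :=
        Finset.sum_congr rfl fun i hi => by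
          rw [hMN i hi, Finset.sum_mul]
          exact Finset.sum_congr rfl fun j _ => (mul_assoc _ _ _).symm

lemma ppow_succ' {M : PDO} (hM : IsLowerType M) :
    ∀ k : ℕ, ppow M (k + 1) = pmul M (ppow M k)
  | 0 => by
    show pmul (ppow M 0) M = pmul M (ppow M 0)
    rw [pmul_ppow_zero, ppow_zero_pmul]
  | k + 1 => by
    show pmul (ppow M (k + 1)) M = pmul M (pmul (ppow M k) M)
    rw [ppow_succ' hM k, pmul_assoc_of_isLowerType hM (hM.ppow k) hM]

lemma padj_ppow {M : PDO} (hM : IsLowerType (padj M)) :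
    ∀ k : ℕ, padj (ppow M k) = ppow (padj M) k
  | 0 => by
    funext n m
    simp only [padj, ppow, eq_comm]
  | k + 1 => by
    show padj (pmul (ppow M k) M) = ppow (padj M) (k + 1)
    rw [padj_pmul, padj_ppow hM k, ppow_succ' hM]

lemma pmul_ppow_eq_ppow_pmul {A X Y : PDO} (hA : IsLowerType A) (hX : IsLowerType X)
    (hY : IsLowerType Y) (h : pmul A X = pmul Y A) :
    ∀ k : ℕ, pmul A (ppow X k) = pmul (ppow Y k) A
  | 0 => by rw [pmul_ppow_zero, ppow_zero_pmul]
  | k + 1 =>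
    calc pmul A (pmul (ppow X k) X)
        = pmul (pmul A (ppow X k)) X := pmul_assoc_of_isLowerType hA (hX.ppow k) hX
      _ = pmul (pmul (ppow Y k) A) X := by rw [pmul_ppow_eq_ppow_pmul hA hX hY h k]
      _ = pmul (ppow Y k) (pmul Y A) := by
        rw [← h, pmul_assoc_of_isLowerType (hY.ppow k) hA hX]
      _ = pmul (pmul (ppow Y k) Y) A := pmul_assoc_of_isLowerType (hY.ppow k) hY hA

section ShiftWeights

variable (φ : ℤ → ℂ) (M : PDO) (n m : ℤ)

lemma hasSum_Tmat_mul :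
    HasSum (fun k => Tmat φ n k * M k m) (Complex.exp (-φ n) * M (n + 1) m) := by
  convert hasSum_single (f := fun k => Tmat φ n k * M k m) (n + 1) fun k hk => by
    simp only [Tmat, if_neg hk, zero_mul]
  simp [Tmat]

lemma hasSum_padj_Tmat_mul :
    HasSum (fun k => padj (Tmat φ) n k * M k m) (Complex.exp (-φ (n - 1)) * M (n - 1) m) := by
  convert hasSum_single (f := fun k => padj (Tmat φ) n k * M k m) (n - 1) fun k hk => by
    simp only [padj, Tmat, if_neg (show n ≠ k + 1 by omega), zero_mul]
  simp [padj, Tmat]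

lemma hasSum_mul_Tmat :
    HasSum (fun k => M n k * Tmat φ k m) (M n (m - 1) * Complex.exp (-φ (m - 1))) := by
  convert hasSum_single (f := fun k => M n k * Tmat φ k m) (m - 1) fun k hk => by
    simp only [Tmat, if_neg (show m ≠ k + 1 by omega), mul_zero]
  simp [Tmat]

lemma hasSum_mul_padj_Tmat :
    HasSum (fun k => M n k * padj (Tmat φ) k m) (M n (m + 1) * Complex.exp (-φ m)) := by
  convert hasSum_single (f := fun k => M n k * padj (Tmat φ) k m) (m + 1) fun k hk => by
    simp only [padj, Tmat, if_neg hk, mul_zero]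
  simp [padj, Tmat]

lemma Tmat_sub_padj_pmul_apply :
    pmul (Tmat φ - padj (Tmat φ)) M n m
      = Complex.exp (-φ n) * M (n + 1) m - Complex.exp (-φ (n - 1)) * M (n - 1) m := by
  simp only [pmul, Pi.sub_apply, sub_mul]
  exact ((hasSum_Tmat_mul φ M n m).sub (hasSum_padj_Tmat_mul φ M n m)).tsum_eq

lemma pmul_Tmat_sub_padj_apply :
    pmul M (Tmat φ - padj (Tmat φ)) n m
      = M n (m - 1) * Complex.exp (-φ (m - 1)) - M n (m + 1) * Complex.exp (-φ m) := by
  simp only [pmul, Pi.sub_apply, mul_sub]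
  exact ((hasSum_mul_Tmat φ M n m).sub (hasSum_mul_padj_Tmat φ M n m)).tsum_eq

end ShiftWeights

lemma padj_Tmat_sub_padj (φ : ℤ → ℂ) :
    padj (Tmat φ - padj (Tmat φ)) = -(Tmat φ - padj (Tmat φ)) := by
  funext n m
  simp only [padj, Pi.sub_apply, Pi.neg_apply, neg_sub]

lemma isLowerType_Tmat_sub_padj (φ : ℤ → ℂ) : IsLowerType (Tmat φ - padj (Tmat φ)) :=
  ⟨1, fun n m h => by simp only [Pi.sub_apply, Tmat, padj, if_neg (show m ≠ n + 1 by omega),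
    if_neg (show n ≠ m + 1 by omega), sub_zero]⟩

lemma pmul_pplus_sub_pplus_pmul_of_intertwines {φ : ℤ → ℂ} {X Y : PDO}
    (h : pmul (Tmat φ - padj (Tmat φ)) X = pmul Y (Tmat φ - padj (Tmat φ))) :
    pmul (Tmat φ - padj (Tmat φ)) (pplus X) - pmul (pplus Y) (Tmat φ - padj (Tmat φ))
      = pmul (pdiag 1 Y) (padj (Tmat φ)) - pmul (padj (Tmat φ)) (pdiag 1 X)
        + pmul (pzero Y) (Tmat φ) - pmul (Tmat φ) (pzero X) := by
  funext n m
  have hnm := congrFun (congrFun h n) m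
  rw [Tmat_sub_padj_pmul_apply, pmul_Tmat_sub_padj_apply] at hnm
  simp only [Pi.sub_apply, Pi.add_apply, Tmat_sub_padj_pmul_apply, pmul_Tmat_sub_padj_apply]
  unfold pmul
  rw [(hasSum_mul_padj_Tmat φ _ n m).tsum_eq, (hasSum_padj_Tmat_mul φ _ n m).tsum_eq,
    (hasSum_mul_Tmat φ _ n m).tsum_eq, (hasSum_Tmat_mul φ _ n m).tsum_eq]
  simp only [pplus, pdiag, pzero]
  obtain hmn | rfl | rfl | hmn : m < n ∨ m = n ∨ m = n + 1 ∨ n + 1 < m := by omega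
  · split_ifs <;> first | (exfalso; omega) | ring
  · split_ifs <;> first | (exfalso; omega) | ring
  · simp only [add_sub_cancel_right] at hnm ⊢
    split_ifs <;> first | (exfalso; omega) | linear_combination hnm
  · split_ifs <;> first | (exfalso; omega) | linear_combination hnm

/-- identity (4.c4a) for the positive projections under the
constraint of type B. -/
theorem typeB_positive_projection_identity
    (L Lb : PDO) (φ : ℤ → ℂ)
    (hpair : IsStandardPair L Lb)
    (hconstr : pmul (Tmat φ - padj (Tmat φ)) Lb
      = pmul (padj L) (Tmat φ - padj (Tmat φ))) :
    ∀ k : ℕ, 1 ≤ k →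
      pmul (Tmat φ - padj (Tmat φ)) (Bop L k)
        - pmul (padj (Bbarop Lb k)) (Tmat φ - padj (Tmat φ))
      = pmul (pdiag 1 (ppow (padj Lb) k)) (padj (Tmat φ))
        - pmul (padj (Tmat φ)) (pdiag 1 (ppow L k))
        + pmul (Phibarop Lb k) (Tmat φ)
        - pmul (Tmat φ) (Phiop L k) := by
  obtain ⟨hL, -, hLb⟩ := hpair
  have hLbadj : IsLowerType (padj Lb) := ⟨1, fun n m h => hLb m n (by omega)⟩
  have hintertwine :
      pmul (Tmat φ - padj (Tmat φ)) L = pmul (padj Lb) (Tmat φ - padj (Tmat φ)) := by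
    have := congrArg padj hconstr
    rw [padj_pmul, padj_pmul, padj_padj, padj_Tmat_sub_padj, pmul_neg, neg_pmul, neg_inj] at this
    exact this.symm
  intro k _
  rw [Bop, Bbarop, Phiop, Phibarop, padj_pminus, ← pzero_padj, padj_ppow hLbadj]
  exact pmul_pplus_sub_pplus_pmul_of_intertwines
    (pmul_ppow_eq_ppow_pmul (isLowerType_Tmat_sub_padj φ) ⟨1, hL⟩ hLbadj hintertwine k)
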